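/- Let G be a Gibonacci sequence and let p ≥ 2 and m ≥ p be natural numbers. Then Σ_{k=2p}^{m} C(k−p−1, p−1) · G_{m−k} + Σ_{t=0}^{p−1} ( G_1 · C(m−t−1, t) + G_0 · C(m−t−1, t−1) ) = G_m. -/

import Mathlib

/-- Binomial coefficient `C a b` with an integer lower index, with the
convention that it vanishes for negative lower index. -/
def C (a : ℕ) (b : ℤ) : ℤ := if 0 ≤ b then (a.choose b.toNat : ℤ) else 0

/-!
Write `A(m)` and `B(m)` for the two sums. For `m < 2p` the first sum is empty and, all omitted
terms being zero, the second is the diagonal expansion `G_m = G_1 F_m + G_0 F_{m-1}` with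
`F_{n+1} = ∑ C(n - t, t)`. From `m = p` on, Pascal's rule shows that `A` and `B` each satisfy the
Fibonacci recurrence up to the boundary term `G_1 C(m-p, p-1) + G_0 C(m-p, p-2)`, which enters
`A` and `B` with opposite signs. Hence `A + B` and `G` satisfy the same recurrence and agree at
`m = p, p + 1`.
-/

open Finset

theorem Nat.fib_succ_eq_sum_range_choose {n q : ℕ} (h : n < 2 * q) :
    fib (n + 1) = ∑ t ∈ range q, (n - t).choose t := by
  have trunc : ∀ r, n < 2 * r →
      ∑ t ∈ range r, (n - t).choose t = ∑ t ∈ range (n / 2 + 1), (n - t).choose t := by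
    intro r hr
    refine (sum_subset (range_subset_range.2 (by omega)) fun t _ ht => ?_).symm
    exact choose_eq_zero_of_lt (by simp at ht; omega)
  rw [fib_succ_eq_sum_choose, ← Finset.Nat.sum_antidiagonal_swap]
  simp only [Prod.fst_swap, Prod.snd_swap]
  rw [Finset.Nat.sum_antidiagonal_eq_sum_range_succ (fun i j => j.choose i), trunc q h,
    trunc (n + 1) (by omega)]

lemma C_natCast (a t : ℕ) : C a t = a.choose t := by simp [C]

lemma C_of_neg (a : ℕ) {b : ℤ} (hb : b < 0) : C a b = 0 := by simp [C, not_le.2 hb]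

lemma C_succ (a : ℕ) (b : ℤ) : C (a + 1) b = C a b + C a (b - 1) := by
  obtain hb | ⟨t, rfl⟩ | rfl : b < 0 ∨ (∃ t : ℕ, b = t + 1) ∨ b = 0 := by
    rcases lt_trichotomy b 0 with h | h | h
    · exact Or.inl h
    · exact Or.inr (Or.inr h)
    · exact Or.inr (Or.inl ⟨(b - 1).toNat, by omega⟩)
  · rw [C_of_neg _ hb, C_of_neg _ hb, C_of_neg _ (by omega), add_zero]
  · rw [add_sub_cancel_right, ← Nat.cast_succ, C_natCast, C_natCast, C_natCast,
      Nat.choose_succ_succ', Nat.cast_add, add_comm]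
  · simp [C]

lemma eq_of_fib_recurrence {R : Type*} [Add R] {u v : ℕ → R} {a : ℕ}
    (hu : ∀ n, a ≤ n → u (n + 2) = u (n + 1) + u n)
    (hv : ∀ n, a ≤ n → v (n + 2) = v (n + 1) + v n)
    (h₀ : u a = v a) (h₁ : u (a + 1) = v (a + 1)) {n : ℕ} (hn : a ≤ n) : u n = v n := by
  obtain ⟨k, rfl⟩ := Nat.exists_eq_add_of_le hn
  clear hn
  induction k using Nat.twoStepInduction with
  | zero => exact h₀
  | one => exact h₁
  | more k ih₀ ih₁ =>
    rw [← add_assoc, hu _ (Nat.le_add_right a k), hv _ (Nat.le_add_right a k)]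
    exact congrArg₂ (· + ·) ih₁ ih₀

lemma C_sub_sub_one_eq_zero {p k : ℕ} (hp : 2 ≤ p) (hk : k < 2 * p) :
    C (k - p - 1) ((p : ℤ) - 1) = 0 := by
  rw [show (p : ℤ) - 1 = ((p - 1 : ℕ) : ℤ) by omega, C_natCast,
    Nat.choose_eq_zero_of_lt (by omega), Nat.cast_zero]

namespace Gibonacci

def diagonalTerm (G : ℕ → ℤ) (n t : ℕ) : ℤ :=
  G 1 * C (n - t - 1) t + G 0 * C (n - t - 1) ((t : ℤ) - 1)

def diagonalSum (G : ℕ → ℤ) (p n : ℕ) : ℤ := ∑ t ∈ range p, diagonalTerm G n t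

def horizontalSum (G : ℕ → ℤ) (p n : ℕ) : ℤ :=
  ∑ k ∈ range (n + 1), C (k - p - 1) ((p : ℤ) - 1) * G (n - k)

variable {G : ℕ → ℤ}

lemma diagonalTerm_add_two_zero (n : ℕ) :
    diagonalTerm G (n + 2) 0 = diagonalTerm G (n + 1) 0 := by
  simp [diagonalTerm, C]

lemma diagonalTerm_add_two_succ {n t : ℕ} (ht : t < n) :
    diagonalTerm G (n + 2) (t + 1) = diagonalTerm G (n + 1) (t + 1) + diagonalTerm G n t := by
  simp only [diagonalTerm, show n + 2 - (t + 1) - 1 = n - t - 1 + 1 by omega,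
    show n + 1 - (t + 1) - 1 = n - t - 1 by omega, Nat.cast_succ, add_sub_cancel_right, C_succ]
  ring

lemma diagonalSum_add_two {q n : ℕ} (hqn : q ≤ n) :
    diagonalSum G (q + 1) (n + 2) + diagonalTerm G n q =
      diagonalSum G (q + 1) (n + 1) + diagonalSum G (q + 1) n := by
  have step : ∀ t ∈ range q, diagonalTerm G (n + 2) (t + 1) =
      diagonalTerm G (n + 1) (t + 1) + diagonalTerm G n t :=
    fun t ht => diagonalTerm_add_two_succ (by simp at ht; omega)
  rw [diagonalSum, diagonalSum, diagonalSum, sum_range_succ', sum_range_succ' _ q,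
    sum_range_succ _ q, sum_congr rfl step, sum_add_distrib, diagonalTerm_add_two_zero]
  ring

lemma horizontalSum_eq_zero_of_lt {p n : ℕ} (hp : 2 ≤ p) (hn : n < 2 * p) :
    horizontalSum G p n = 0 :=
  sum_eq_zero fun k hk => by rw [C_sub_sub_one_eq_zero hp (by simp at hk; omega), zero_mul]

variable (hG : ∀ n, G (n + 2) = G (n + 1) + G n)
include hG

lemma succ_eq_fib (n : ℕ) : G (n + 1) = G 1 * Nat.fib (n + 1) + G 0 * Nat.fib n := by
  induction n using Nat.twoStepInduction with
  | zero => simp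
  | one => simp [hG 0, add_comm]
  | more n ih₁ ih₂ =>
    rw [hG, ih₁, ih₂, Nat.fib_add_two (n := n + 1), Nat.fib_add_two (n := n)]
    push_cast; ring

lemma sum_range_mul_add_two (c : ℕ → ℤ) (n : ℕ) :
    ∑ k ∈ range (n + 3), c k * G (n + 2 - k) =
      ∑ k ∈ range (n + 2), c k * G (n + 1 - k) + ∑ k ∈ range (n + 1), c k * G (n - k)
        + c (n + 1) * (G 1 - G 0) + c (n + 2) * G 0 := by
  have split : ∀ k ∈ range (n + 1),
      c k * G (n + 2 - k) = c k * G (n + 1 - k) + c k * G (n - k) := by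
    intro k hk
    rw [show n + 2 - k = n - k + 2 by simp at hk; omega,
      show n + 1 - k = n - k + 1 by simp at hk; omega, hG]
    ring
  rw [sum_range_succ, sum_range_succ, sum_congr rfl split, sum_add_distrib,
    sum_range_succ _ (n + 1)]
  simp only [Nat.sub_self, show n + 2 - (n + 1) = 1 by omega]
  ring

lemma horizontalSum_add_two {q n : ℕ} (hqn : q < n) :
    horizontalSum G (q + 1) (n + 2) =
      horizontalSum G (q + 1) (n + 1) + horizontalSum G (q + 1) n + diagonalTerm G n q := by
  rw [horizontalSum, horizontalSum, horizontalSum, sum_range_mul_add_two hG]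
  simp only [diagonalTerm, show n + 2 - (q + 1) - 1 = n - q - 1 + 1 by omega,
    show n + 1 - (q + 1) - 1 = n - q - 1 by omega, Nat.cast_succ, add_sub_cancel_right, C_succ]
  ring

lemma diagonalSum_eq_of_lt {p n : ℕ} (hn : 2 ≤ n) (hnp : n < 2 * p) :
    diagonalSum G p n = G n := by
  obtain ⟨q, rfl⟩ : ∃ q, p = q + 1 := ⟨p - 1, by omega⟩
  obtain ⟨m, rfl⟩ : ∃ m, n = m + 1 := ⟨n - 1, by omega⟩
  have fib_succ : ∑ t ∈ range (q + 1), C (m - t) t = Nat.fib (m + 1) := by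
    simp only [C_natCast]
    rw [← Nat.cast_sum, ← Nat.fib_succ_eq_sum_range_choose (by omega)]
  have fib : ∑ t ∈ range (q + 1), C (m - t) ((t : ℤ) - 1) = Nat.fib m := by
    rw [sum_range_succ', C_of_neg _ (by norm_num), add_zero]
    have shift : ∀ t : ℕ,
        C (m - (t + 1)) (((t + 1 : ℕ) : ℤ) - 1) = (m - 1 - t).choose t := by
      intro t
      rw [Nat.cast_succ, add_sub_cancel_right, C_natCast, Nat.sub_add_eq, Nat.sub_right_comm]
    simp only [shift]
    rw [← Nat.cast_sum, ← Nat.fib_succ_eq_sum_range_choose (by omega),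
      Nat.sub_add_cancel (by omega)]
  rw [diagonalSum, succ_eq_fib hG, ← fib_succ, ← fib, mul_sum, mul_sum, ← sum_add_distrib]
  simp only [diagonalTerm, Nat.add_sub_cancel, Nat.sub_right_comm (m + 1) _ 1]

lemma horizontalSum_add_diagonalSum {p n : ℕ} (hp : 2 ≤ p) (hn : p ≤ n) :
    horizontalSum G p n + diagonalSum G p n = G n := by
  obtain ⟨q, rfl⟩ : ∃ q, p = q + 1 := ⟨p - 1, by omega⟩
  refine eq_of_fib_recurrence (u := fun n => horizontalSum G (q + 1) n + diagonalSum G (q + 1) n)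
    (fun n hn => ?_) (fun n _ => hG n) ?_ ?_ hn
  · linarith [horizontalSum_add_two hG (show q < n by omega),
      diagonalSum_add_two (G := G) (show q ≤ n by omega)]
  · rw [horizontalSum_eq_zero_of_lt hp (by omega), diagonalSum_eq_of_lt hG hp (by omega), zero_add]
  · rw [horizontalSum_eq_zero_of_lt hp (by omega), diagonalSum_eq_of_lt hG (by omega) (by omega),
      zero_add]

end Gibonacci

theorem gibonacci_pth_horizontal_single (G : ℕ → ℤ)
    (hG : ∀ n, G (n + 2) = G (n + 1) + G n)
    (p m : ℕ) (hp : 2 ≤ p) (hm : p ≤ m) :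
    (∑ k ∈ Finset.Icc (2 * p) m, C (k - p - 1) ((p : ℤ) - 1) * G (m - k)) +
      (∑ t ∈ Finset.range p,
        (G 1 * C (m - t - 1) (t : ℤ) + G 0 * C (m - t - 1) ((t : ℤ) - 1))) = G m := by
  have horizontal : ∑ k ∈ Icc (2 * p) m, C (k - p - 1) ((p : ℤ) - 1) * G (m - k) =
      Gibonacci.horizontalSum G p m := by
    refine sum_subset (fun k hk => by simp at hk ⊢; omega) fun k hk hk' => ?_
    rw [C_sub_sub_one_eq_zero hp (by simp at hk hk'; omega), zero_mul]
  rw [horizontal]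
  exact Gibonacci.horizontalSum_add_diagonalSum hG hp hm
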